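/- arXiv:1908.03703 — 2 statements merged into one kernel-verified Lean document; each statement's English description precedes it below -/
import Mathlib

section
/- Let V = F_q^{q+1} with q ≥ 2, and let C be a 2-dimensional subspace of V with generator matrix M (a 2 × (q+1) matrix whose rows form a basis of C). Then every nonzero vector of C has exactly one zero coordinate if and only if the q+1 columns of M are pairwise non-proportional. -/
/-- A vector of `F^n` is *simplex* if exactly one of its coordinates is zero. -/
def SimplexVec {F : Type*} [Field F] [DecidableEq F] {n : ℕ} (x : Fin n → F) : Prop :=
  (Finset.univ.filter (fun i => x i = 0)).card = 1

/-- A *simplex point* is a 1-dimensional subspace spanned by a simplex vector. -/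
def SimplexPoint {F : Type*} [Field F] [DecidableEq F] {n : ℕ}
    (P : Submodule F (Fin n → F)) : Prop :=
  ∃ x : Fin n → F, SimplexVec x ∧ P = Submodule.span F {x}

/-- A *simplex line* is a 2-dimensional subspace all of whose nonzero vectors
are simplex. -/
def SimplexLine {F : Type*} [Field F] [DecidableEq F] {n : ℕ}
    (L : Submodule F (Fin n → F)) : Prop :=
  Module.finrank F ↥L = 2 ∧ ∀ x ∈ L, x ≠ 0 → SimplexVec x

/-!
Write `x = w ᵥ* M` with `w ≠ 0` in `F²`, so that `x j = w ⬝ᵥ M_j` for the column `M_j`: the zeros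
of `x` are the columns on the line `w^⊥ = F • (-w₁, w₀)`. If two columns are proportional, a
nonzero `w` orthogonal to one of them kills both. Conversely, pairwise non-proportional columns
are nonzero and define `q + 1` distinct points of `ℙ¹(F)`, which has exactly `q + 1` points, so
each line `w^⊥` contains exactly one column.
-/

open Matrix

theorem simplexVec_iff_existsUnique {F : Type*} [Field F] [DecidableEq F] {n : ℕ}
    {x : Fin n → F} : SimplexVec x ↔ ∃! i, x i = 0 := by
  simp [SimplexVec, Finset.card_eq_one_iff_existsUnique]

section Plane

variable {K : Type*} [Field K]

def vecPerp (w : Fin 2 → K) : Fin 2 → K := ![-w 1, w 0]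

theorem vecPerp_ne_zero {w : Fin 2 → K} (hw : w ≠ 0) : vecPerp w ≠ 0 := by
  contrapose! hw
  ext i
  fin_cases i
  · simpa [vecPerp] using congrFun hw 1
  · simpa [vecPerp] using congrFun hw 0

theorem dotProduct_vecPerp_self (w : Fin 2 → K) : w ⬝ᵥ vecPerp w = 0 := by
  simp only [dotProduct, vecPerp, Fin.sum_univ_two, cons_val_zero, cons_val_one, cons_val_fin_one]
  ring

theorem dotProduct_eq_zero_iff_exists_smul_vecPerp {w : Fin 2 → K} (hw : w ≠ 0)
    {v : Fin 2 → K} : w ⬝ᵥ v = 0 ↔ ∃ c : K, v = c • vecPerp w := by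
  constructor
  · intro h
    simp only [dotProduct, Fin.sum_univ_two] at h
    by_cases h0 : w 0 = 0
    · have h1 : w 1 ≠ 0 := fun h1 => hw (by ext i; fin_cases i <;> simp [h0, h1])
      refine ⟨-v 0 / w 1, ?_⟩
      ext i; fin_cases i <;> simp [vecPerp] <;> field_simp; linear_combination h
    · refine ⟨v 1 / w 0, ?_⟩
      ext i; fin_cases i <;> simp [vecPerp] <;> field_simp; linear_combination h
  · rintro ⟨c, rfl⟩
    rw [dotProduct_smul, dotProduct_vecPerp_self, smul_zero]

variable {ι : Type*}

theorem ne_zero_of_pairwise_not_proportional [Nontrivial ι] {v : ι → Fin 2 → K}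
    (hv : Pairwise fun j j' => ¬∃ c : K, v j' = c • v j) (j : ι) : v j ≠ 0 := by
  intro hj
  obtain ⟨j', hj'⟩ := exists_ne j
  exact hv hj' ⟨0, by rw [hj, zero_smul]⟩

theorem bijective_mk_of_pairwise_not_proportional [Finite K] [Finite ι] {v : ι → Fin 2 → K}
    (hcard : Nat.card ι = Nat.card K + 1) (hv₀ : ∀ j, v j ≠ 0)
    (hv : Pairwise fun j j' => ¬∃ c : K, v j' = c • v j) :
    Function.Bijective fun j => Projectivization.mk K (v j) (hv₀ j) := by
  refine Function.Injective.bijective_of_nat_card_le (fun j j' h => ?_) ?_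
  · by_contra hjj'
    obtain ⟨c, hc⟩ := (Projectivization.mk_eq_mk_iff' K _ _ _ _).mp h
    exact hv (Ne.symm hjj') ⟨c, hc.symm⟩
  · rw [Projectivization.card_of_finrank_two K _ (Module.finrank_fin_fun K), hcard]

theorem existsUnique_dotProduct_eq_zero_of_pairwise_not_proportional [Finite K] [Finite ι]
    {v : ι → Fin 2 → K}
    (hcard : Nat.card ι = Nat.card K + 1)
    (hv : Pairwise fun j j' => ¬∃ c : K, v j' = c • v j) {w : Fin 2 → K} (hw : w ≠ 0) :
    ∃! j, w ⬝ᵥ v j = 0 := by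
  have : Nontrivial ι := by
    rw [← Finite.one_lt_card_iff_nontrivial, hcard]
    have := Finite.one_lt_card (α := K)
    omega
  have hv₀ := ne_zero_of_pairwise_not_proportional hv
  obtain ⟨j, hj⟩ := (bijective_mk_of_pairwise_not_proportional hcard hv₀ hv).2
    (Projectivization.mk K (vecPerp w) (vecPerp_ne_zero hw))
  obtain ⟨a, ha⟩ := (Projectivization.mk_eq_mk_iff' K _ _ _ _).mp hj
  refine ⟨j, (dotProduct_eq_zero_iff_exists_smul_vecPerp hw).mpr ⟨a, ha.symm⟩, fun i hi => ?_⟩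
  by_contra hij
  obtain ⟨c, hc⟩ := (dotProduct_eq_zero_iff_exists_smul_vecPerp hw).mp hi
  have ha₀ : a ≠ 0 := by rintro rfl; exact hv₀ j (by rw [← ha, zero_smul])
  exact hv (Ne.symm hij) ⟨c / a, by rw [hc, ← ha, smul_smul, div_mul_cancel₀ _ ha₀]⟩

end Plane

theorem simplex_line_iff_columns_non_proportional_general
    (F : Type*) [Field F] [Fintype F] [DecidableEq F] (q : ℕ)
    (hF : Fintype.card F = q)
    (M : Matrix (Fin 2) (Fin (q + 1)) F)
    (C : Submodule F (Fin (q + 1) → F))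
    (hindep : LinearIndependent F (fun i : Fin 2 => M i))
    (hspan : C = Submodule.span F (Set.range (fun i : Fin 2 => M i))) :
    (∀ x ∈ C, x ≠ 0 → SimplexVec x) ↔
      ∀ j j' : Fin (q + 1), j ≠ j' →
        ¬∃ c : F, (fun i : Fin 2 => M i j') = c • (fun i : Fin 2 => M i j) := by
  have hC : C = LinearMap.range M.vecMulLinear := by rw [hspan, range_vecMulLinear]; rfl
  have hinj : Function.Injective M.vecMul := vecMul_injective_iff.mpr hindep
  subst hC
  constructor
  · rintro hs j j' hjj' ⟨c, hc⟩
    obtain ⟨w, hw, hwj⟩ := exists_ne_zero_dotProduct_eq_zero fun i => M i j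
    have hwj' : w ⬝ᵥ (fun i => M i j') = 0 := by rw [hc, dotProduct_smul, hwj, smul_zero]
    have hx₀ : w ᵥ* M ≠ 0 := fun h => hw (hinj (h.trans (zero_vecMul M).symm))
    exact hjj' ((simplexVec_iff_existsUnique.mp (hs _ ⟨w, rfl⟩ hx₀)).unique hwj hwj')
  · rintro hM _ ⟨w, rfl⟩ hx₀
    have hw : w ≠ 0 := by rintro rfl; exact hx₀ (zero_vecMul M)
    have hcard : Nat.card (Fin (q + 1)) = Nat.card F + 1 := by simp [hF]
    exact simplexVec_iff_existsUnique.mpr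
      (existsUnique_dotProduct_eq_zero_of_pairwise_not_proportional hcard hM hw)

/-- For a 2-dimensional subspace `C` of `F^(q+1)` with generator matrix `M`,
every nonzero vector of `C` has exactly one zero coordinate iff the columns of
`M` are pairwise non-proportional. -/
theorem simplex_line_iff_columns_non_proportional
    (F : Type*) [Field F] [Fintype F] [DecidableEq F] (q : ℕ) (hq : 2 ≤ q)
    (hF : Fintype.card F = q)
    (M : Matrix (Fin 2) (Fin (q + 1)) F)
    (C : Submodule F (Fin (q + 1) → F))
    (hindep : LinearIndependent F (fun i : Fin 2 => M i))
    (hspan : C = Submodule.span F (Set.range (fun i : Fin 2 => M i))) :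
    (∀ x ∈ C, x ≠ 0 → SimplexVec x) ↔
      ∀ j j' : Fin (q + 1), j ≠ j' →
        ¬∃ c : F, (fun i : Fin 2 => M i j') = c • (fun i : Fin 2 => M i j) :=
  simplex_line_iff_columns_non_proportional_general F q hF M C hindep hspan
end

section
/- Let q ≥ 2 and V = F_q^{q+1}. In the graph whose vertices are the simplex lines of V, with two simplex lines adjacent when their intersection is 1-dimensional, every vertex has degree exactly (q+1)·((q-1)! − 1). -/
open Module Submodule

section SimplexVec

variable {F : Type*} [Field F] [DecidableEq F] {n : ℕ} {x : Fin n → F}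

theorem simplexVec_iff : SimplexVec x ↔ ∃ i, ∀ j, x j = 0 ↔ j = i := by
  simp only [SimplexVec, Finset.card_eq_one, Finset.ext_iff, Finset.mem_filter, Finset.mem_univ,
    true_and, Finset.mem_singleton]

theorem SimplexVec.eq_of_apply_eq_zero (hx : SimplexVec x) {i j : Fin n} (hi : x i = 0)
    (hj : x j = 0) : i = j := by
  obtain ⟨k, hk⟩ := simplexVec_iff.1 hx
  exact ((hk i).1 hi).trans ((hk j).1 hj).symm

theorem SimplexVec.apply_ne_zero (hx : SimplexVec x) {i j : Fin n} (hi : x i = 0) (hj : j ≠ i) :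
    x j ≠ 0 :=
  fun h => hj (hx.eq_of_apply_eq_zero h hi)

theorem SimplexVec.smul (hx : SimplexVec x) {c : F} (hc : c ≠ 0) : SimplexVec (c • x) := by
  simpa [SimplexVec, hc] using hx

end SimplexVec

theorem Submodule.finrank_inf_eq_one_iff {K V : Type*} [DivisionRing K] [AddCommGroup V]
    [Module K V] [FiniteDimensional K V] {L L' : Submodule K V} (hL : finrank K L = 2)
    (hL' : finrank K L' = 2) : finrank K ↥(L ⊓ L') = 1 ↔ L ⊓ L' ≠ ⊥ ∧ L' ≠ L := by
  have h0 : finrank K ↥(L ⊓ L') = 0 ↔ L ⊓ L' = ⊥ := finrank_eq_zero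
  have h2 : finrank K ↥(L ⊓ L') = 2 ↔ L' = L := by
    constructor
    · intro h
      have hLL' : L ≤ L' := inf_eq_left.1 (eq_of_le_of_finrank_eq inf_le_left (h.trans hL.symm))
      exact (eq_of_le_of_finrank_eq hLL' (hL.trans hL'.symm)).symm
    · rintro rfl
      rwa [inf_idem]
  have hle : finrank K ↥(L ⊓ L') ≤ 2 := hL ▸ finrank_mono inf_le_left
  rw [ne_eq, ne_eq, ← h0, ← h2]
  omega

namespace SimplexLine

variable {F : Type*} [Field F] [DecidableEq F] {n : ℕ} {L : Submodule F (Fin n → F)}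

theorem eq_zero_of_apply_eq_zero (hL : SimplexLine L) {x : Fin n → F} (hx : x ∈ L)
    {i j : Fin n} (hij : i ≠ j) (hi : x i = 0) (hj : x j = 0) : x = 0 := by
  by_contra hx0
  exact hij ((hL.2 x hx hx0).eq_of_apply_eq_zero hi hj)

theorem mem_span_singleton_of_apply_eq_zero (hL : SimplexLine L) {x y : Fin n → F} (hx : x ∈ L)
    (hy : y ∈ L) (hx0 : x ≠ 0) {i : Fin n} (hxi : x i = 0) (hyi : y i = 0) :
    y ∈ span F {x} := by
  obtain ⟨j, hxj⟩ := Function.ne_iff.1 hx0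
  have hij : i ≠ j := fun h => hxj (h ▸ hxi)
  have hz : y - (y j / x j) • x = 0 :=
    hL.eq_zero_of_apply_eq_zero (sub_mem hy (smul_mem _ _ hx)) hij (by simp [hxi, hyi])
      (by simp [div_mul_cancel₀ _ hxj])
  exact mem_span_singleton.2 ⟨_, (sub_eq_zero.1 hz).symm⟩

/-- Evaluation at two coordinates is an isomorphism from a simplex line onto `F × F`. -/
theorem exists_mem_apply_eq (hL : SimplexLine L) {i j : Fin n} (hij : i ≠ j) (a b : F) :
    ∃ x ∈ L, x i = a ∧ x j = b := by
  let φ : L →ₗ[F] F × F := (LinearMap.prod (LinearMap.proj i) (LinearMap.proj j)).comp L.subtype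
  have hφ : Function.Injective φ := by
    rw [← LinearMap.ker_eq_bot, eq_bot_iff]
    rintro ⟨x, hx⟩ h
    simpa using hL.eq_zero_of_apply_eq_zero hx hij (congrArg Prod.fst h) (congrArg Prod.snd h)
  obtain ⟨⟨x, hx⟩, hxab⟩ :=
    (LinearMap.injective_iff_surjective_of_finrank_eq_finrank (by simp [hL.1])).1 hφ (a, b)
  exact ⟨x, hx, congrArg Prod.fst hxab, congrArg Prod.snd hxab⟩

theorem exists_ne_zero_apply_eq_zero (hL : SimplexLine L) (i : Fin n) :
    ∃ x ∈ L, x ≠ 0 ∧ x i = 0 := by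
  have hL0 : L ≠ ⊥ := by
    rintro rfl
    simpa using hL.1
  obtain ⟨y, hyL, hy0⟩ := (Submodule.ne_bot_iff L).1 hL0
  obtain ⟨k, hk⟩ := simplexVec_iff.1 (hL.2 y hyL hy0)
  by_cases hik : i = k
  · exact ⟨y, hyL, hy0, (hk i).2 hik⟩
  · obtain ⟨x, hxL, hxi, hxk⟩ := hL.exists_mem_apply_eq hik 0 1
    exact ⟨x, hxL, fun h => by simp [h] at hxk, hxi⟩

end SimplexLine

theorem finrank_span_pair_eq_two {K : Type*} [Field K] {ι : Type*} {u v : ι → K} {i₀ : ι}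
    (hu : u ≠ 0) (hu0 : u i₀ = 0) (hv : v i₀ ≠ 0) : finrank K (span K {u, v}) = 2 := by
  have hind : LinearIndependent K ![u, v] :=
    (LinearIndependent.pair_iff' hu).2 fun a h => hv (by simpa [hu0] using (congrFun h i₀).symm)
  rw [← Matrix.range_cons_cons_empty u v ![]]
  exact finrank_span_eq_card hind

section VecOfRatio

variable {F : Type*} [Field F] {n : ℕ} {u : Fin n → F} {i₀ : Fin n}

def vecOfRatio (u : Fin n → F) (i₀ : Fin n) (f : {i // i ≠ i₀} → F) : Fin n → F :=
  fun i => if h : i = i₀ then 1 else f ⟨i, h⟩ * u i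

@[simp]
theorem vecOfRatio_self (f : {i // i ≠ i₀} → F) : vecOfRatio u i₀ f i₀ = 1 :=
  dif_pos rfl

theorem vecOfRatio_of_ne (f : {i // i ≠ i₀} → F) {i : Fin n} (hi : i ≠ i₀) :
    vecOfRatio u i₀ f i = f ⟨i, hi⟩ * u i :=
  dif_neg hi

variable [DecidableEq F]

theorem simplexVec_vecOfRatio_sub_smul_iff (hu : SimplexVec u) (hu0 : u i₀ = 0)
    (f : {i // i ≠ i₀} → F) (c : F) :
    SimplexVec (vecOfRatio u i₀ f - c • u) ↔ ∃! a, f a = c := by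
  have hz : ∀ a : {i // i ≠ i₀}, (vecOfRatio u i₀ f - c • u) a = 0 ↔ f a = c := fun a => by
    simp [vecOfRatio_of_ne f a.2, ← sub_mul, hu.apply_ne_zero hu0 a.2, sub_eq_zero]
  rw [simplexVec_iff]
  constructor
  · rintro ⟨k, hk⟩
    have hk0 : k ≠ i₀ := fun h => by simpa [hu0] using (hk i₀).2 h.symm
    refine ⟨⟨k, hk0⟩, (hz _).1 ((hk k).2 rfl), fun b hb => Subtype.ext ((hk b).1 ((hz b).2 hb))⟩
  · rintro ⟨a, ha, huniq⟩
    refine ⟨a, fun j => ?_⟩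
    by_cases hj : j = i₀
    · subst hj
      simpa [hu0] using a.2.symm
    · rw [show j = (⟨j, hj⟩ : {i // i ≠ i₀}) from rfl, hz, Subtype.val_inj]
      exact ⟨huniq _, fun h => h ▸ ha⟩

theorem simplexLine_span_vecOfRatio_iff (hu : SimplexVec u) (hu0 : u i₀ = 0)
    (f : {i // i ≠ i₀} → F) :
    SimplexLine (span F {u, vecOfRatio u i₀ f}) ↔ Function.Bijective f := by
  set v := vecOfRatio u i₀ f
  have hw : ∀ c : F, v - c • u ∈ span F {u, v} := fun c =>
    sub_mem (subset_span (by simp)) (smul_mem _ _ (subset_span (by simp)))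
  rw [Function.bijective_iff_existsUnique]
  constructor
  · intro hL c
    refine (simplexVec_vecOfRatio_sub_smul_iff hu hu0 f c).1 (hL.2 _ (hw c) fun h => ?_)
    simpa [v, hu0] using congrFun h i₀
  · intro hf
    have hu' : u ≠ 0 := fun h => by
      obtain ⟨a, -⟩ := hf 0
      exact hu.apply_ne_zero hu0 a.2 (by simp [h])
    refine ⟨finrank_span_pair_eq_two hu' hu0 (by simp [v]), fun x hx hx0 => ?_⟩
    obtain ⟨a, b, rfl⟩ := mem_span_pair.1 hx
    rcases eq_or_ne b 0 with rfl | hb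
    · have ha : a ≠ 0 := by
        rintro rfl
        simp at hx0
      simpa using hu.smul ha
    · have hab : a • u + b • v = b • (v - (-a / b) • u) := by
        rw [smul_sub, smul_smul, mul_div_cancel₀ _ hb, neg_smul, sub_neg_eq_add, add_comm]
      rw [hab]
      exact ((simplexVec_vecOfRatio_sub_smul_iff hu hu0 f _).2 (hf _)).smul hb

end VecOfRatio

open Nat in
theorem card_equiv_apply_eq {α β : Type*} [Fintype α] [Fintype β] [DecidableEq α]
    [DecidableEq β] (h : Fintype.card α = Fintype.card β) (a : α) (b : β) :
    Nat.card {e : α ≃ β // e a = b} = (Fintype.card β - 1)! := by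
  have hcard : Fintype.card {x // x ≠ a} = Fintype.card {y // y ≠ b} := by
    simp [Fintype.card_subtype_compl, h]
  rw [Nat.card_congr ((Equiv.subtypeEquiv
      ((Equiv.optionSubtypeNe a).symm.equivCongr (Equiv.refl β)) fun e => by simp).trans
      (Equiv.optionSubtype b)), Nat.card_eq_fintype_card,
    Fintype.card_equiv (Fintype.equivOfCardEq hcard)]
  simp [Fintype.card_subtype_compl, h]

section Count

variable {F : Type*} [Field F] [DecidableEq F] {n : ℕ}

theorem SimplexLine.exists_eq_span_vecOfRatio {L : Submodule F (Fin n → F)} (hL : SimplexLine L)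
    {u : Fin n → F} (huL : u ∈ L) (hu : SimplexVec u) {i₀ i₁ : Fin n} (hu0 : u i₀ = 0)
    (hi₁ : i₁ ≠ i₀) : ∃ f, f ⟨i₁, hi₁⟩ = 0 ∧ span F {u, vecOfRatio u i₀ f} = L := by
  obtain ⟨v, hvL, hv0, hv1⟩ := hL.exists_mem_apply_eq hi₁.symm 1 0
  have hfv : vecOfRatio u i₀ (fun a => v a / u a) = v := funext fun i => by
    by_cases hi : i = i₀
    · simp [hi, hv0]
    · exact (vecOfRatio_of_ne _ hi).trans (div_mul_cancel₀ _ (hu.apply_ne_zero hu0 hi))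
  refine ⟨fun a => v a / u a, by simp [hv1], ?_⟩
  rw [hfv]
  refine eq_of_le_of_finrank_eq (span_le.2 (by simp [Set.insert_subset_iff, huL, hvL])) ?_
  rw [hL.1, finrank_span_pair_eq_two (fun h => hu.apply_ne_zero hu0 hi₁ (by simp [h])) hu0
    (by simp [hv0])]

open Nat in
theorem card_simplexLine_mem [Fintype F] {q : ℕ} (hF : Fintype.card F = q)
    {u : Fin (q + 1) → F} {i₀ : Fin (q + 1)} (hu : SimplexVec u) (hu0 : u i₀ = 0) :
    Nat.card {L : Submodule F (Fin (q + 1) → F) // SimplexLine L ∧ u ∈ L} = (q - 1)! := by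
  have : Nontrivial (Fin (q + 1)) :=
    Fin.nontrivial_iff_two_le.2 (by have := Fintype.card_pos (α := F); omega)
  obtain ⟨i₁, hi₁⟩ := exists_ne i₀
  rw [show (q - 1)! = Nat.card {e : {i // i ≠ i₀} ≃ F // e ⟨i₁, hi₁⟩ = 0} by
    rw [card_equiv_apply_eq (by simp [Fintype.card_subtype_compl, hF]) _ 0, hF]]
  have hline (e : {i // i ≠ i₀} ≃ F) := (simplexLine_span_vecOfRatio_iff hu hu0 e).2 e.bijective
  refine (Nat.card_eq_of_bijective (fun e => ⟨_, hline e.1, subset_span (by simp)⟩) ⟨?_, ?_⟩).symm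
  · rintro ⟨e, he⟩ ⟨e', he'⟩ h
    have hspan : span F {u, vecOfRatio u i₀ e} = span F {u, vecOfRatio u i₀ e'} :=
      congrArg Subtype.val h
    have hmem : vecOfRatio u i₀ e' - vecOfRatio u i₀ e ∈ span F {u, vecOfRatio u i₀ e} :=
      sub_mem (hspan ▸ subset_span (by simp)) (subset_span (by simp))
    have hsub := (hline e).eq_zero_of_apply_eq_zero hmem hi₁.symm (by simp)
      (by simp [vecOfRatio_of_ne _ hi₁, he, he'])
    refine Subtype.ext (Equiv.ext fun a => (mul_left_inj' (hu.apply_ne_zero hu0 a.2)).1 ?_).symm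
    simpa [vecOfRatio_of_ne _ a.2] using congrFun (sub_eq_zero.1 hsub) a
  · rintro ⟨L, hL, huL⟩
    obtain ⟨f, hf0, hfL⟩ := hL.exists_eq_span_vecOfRatio huL hu hu0 hi₁
    have hf := (simplexLine_span_vecOfRatio_iff hu hu0 f).1 (hfL ▸ hL)
    exact ⟨⟨Equiv.ofBijective f hf, hf0⟩, Subtype.ext hfL⟩

namespace SimplexLine

variable {L : Submodule F (Fin n → F)} {U : Fin n → Fin n → F}

theorem inf_ne_bot_iff (hL : SimplexLine L) (hUL : ∀ i, U i ∈ L) (hU0 : ∀ i, U i ≠ 0)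
    (hUi : ∀ i, U i i = 0) {L' : Submodule F (Fin n → F)} : L ⊓ L' ≠ ⊥ ↔ ∃ i, U i ∈ L' := by
  constructor
  · intro hne
    obtain ⟨x, hx, hx0⟩ := exists_mem_ne_zero_of_ne_bot hne
    obtain ⟨i, hi⟩ := simplexVec_iff.1 (hL.2 x hx.1 hx0)
    have hUx := hL.mem_span_singleton_of_apply_eq_zero hx.1 (hUL i) hx0 ((hi i).2 rfl) (hUi i)
    exact ⟨i, span_le.2 (Set.singleton_subset_iff.2 hx.2) hUx⟩
  · rintro ⟨i, hi⟩
    exact Submodule.ne_bot_iff _ |>.2 ⟨U i, ⟨hUL i, hi⟩, hU0 i⟩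

theorem eq_of_mem_of_mem (hL : SimplexLine L) (hUL : ∀ i, U i ∈ L) (hU0 : ∀ i, U i ≠ 0)
    (hUi : ∀ i, U i i = 0) {L' : Submodule F (Fin n → F)} (hL' : SimplexLine L') (hne : L' ≠ L)
    {i j : Fin n} (hi : U i ∈ L') (hj : U j ∈ L') : i = j := by
  have hrank : finrank F ↥(L ⊓ L') = 1 :=
    (finrank_inf_eq_one_iff hL.1 hL'.1).2 ⟨(hL.inf_ne_bot_iff hUL hU0 hUi).2 ⟨i, hi⟩, hne⟩
  have hspan : span F {U i} = L ⊓ L' :=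
    eq_of_le_of_finrank_eq (span_singleton_le_iff_mem _ _ |>.2 ⟨hUL i, hi⟩)
      (by rw [finrank_span_singleton (hU0 i), hrank])
  obtain ⟨c, hc⟩ := mem_span_singleton.1 (hspan ▸ ⟨hUL j, hj⟩ : U j ∈ span F {U i})
  exact (hL.2 _ (hUL j) (hU0 j)).eq_of_apply_eq_zero (by simp [← hc, hUi]) (hUi j)

theorem card_adjacent_eq_sum [Fintype F] (hL : SimplexLine L) (hUL : ∀ i, U i ∈ L)
    (hU0 : ∀ i, U i ≠ 0) (hUi : ∀ i, U i i = 0) :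
    Nat.card {L' : Submodule F (Fin n → F) //
        SimplexLine L' ∧ L' ≠ L ∧ finrank F ↥(L ⊓ L') = 1} =
      ∑ i, (Nat.card {L' : Submodule F (Fin n → F) // SimplexLine L' ∧ U i ∈ L'} - 1) := by
  classical
  have hadj (L' : Submodule F (Fin n → F)) :
      (SimplexLine L' ∧ L' ≠ L ∧ finrank F ↥(L ⊓ L') = 1) ↔
        ∃ i, L' ≠ L ∧ SimplexLine L' ∧ U i ∈ L' := by
    by_cases hL' : SimplexLine L'
    · simp [hL', finrank_inf_eq_one_iff hL.1 hL'.1, hL.inf_ne_bot_iff hUL hU0 hUi, and_comm]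
    · simp [hL']
  have herase (i : Fin n) : (({L' | SimplexLine L' ∧ U i ∈ L'} : Finset _).erase L).card =
      ({L' | SimplexLine L' ∧ U i ∈ L'} : Finset _).card - 1 :=
    Finset.card_erase_of_mem (by simp [hL, hUL i])
  simp only [Nat.card_eq_fintype_card, Fintype.card_subtype, ← herase]
  rw [← Finset.card_biUnion]
  · congr 1
    ext L'
    simp [hadj]
  · intro i _ j _ hij
    refine Finset.disjoint_left.2 fun L' hi hj => hij ?_
    simp only [Finset.mem_erase, Finset.mem_filter] at hi hj
    exact hL.eq_of_mem_of_mem hUL hU0 hUi hi.2.2.1 hi.1 hi.2.2.2 hj.2.2.2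

end SimplexLine

end Count

theorem simplex_line_graph_degree_general
    (F : Type*) [Field F] [Fintype F] [DecidableEq F] (q : ℕ)
    (hF : Fintype.card F = q)
    (L : Submodule F (Fin (q + 1) → F)) (hL : SimplexLine L) :
    Nat.card {L' : Submodule F (Fin (q + 1) → F) //
        SimplexLine L' ∧ L' ≠ L ∧ Module.finrank F ↥(L ⊓ L') = 1} =
      (q + 1) * (Nat.factorial (q - 1) - 1) := by
  choose U hUL hU0 hUi using hL.exists_ne_zero_apply_eq_zero
  rw [hL.card_adjacent_eq_sum hUL hU0 hUi]
  simp [card_simplexLine_mem hF (hL.2 _ (hUL _) (hU0 _)) (hUi _)]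

/-- In the graph of simplex lines of `F_q^(q+1)` (adjacency: 1-dimensional
intersection), every vertex has degree `(q+1)·((q-1)! - 1)`. -/
theorem simplex_line_graph_degree
    (F : Type*) [Field F] [Fintype F] [DecidableEq F] (q : ℕ) (hq : 2 ≤ q)
    (hF : Fintype.card F = q)
    (L : Submodule F (Fin (q + 1) → F)) (hL : SimplexLine L) :
    Nat.card {L' : Submodule F (Fin (q + 1) → F) //
        SimplexLine L' ∧ L' ≠ L ∧ Module.finrank F ↥(L ⊓ L') = 1} =
      (q + 1) * (Nat.factorial (q - 1) - 1) :=
  simplex_line_graph_degree_general F q hF L hL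
end
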